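/- arXiv:2102.04108 — 3 statements merged into one kernel-verified Lean document; each statement's English description precedes it below -/
import Mathlib

section
/- (Dynamic Sasvi dominates Gap Safe Moon) For Lasso-like problems with g positively homogeneous, define u^DS(θ; β̃) = -f*(-θ) if g(β̃) - θᵀXβ̃ ≥ 0 else -∞, and u^GM(θ; β̃) = -f*(-θ) if -f*(-θ) ≤ P(β̃) else -∞, where P(β̃) = (1/2)‖y - Xβ̃‖₂² + g(β̃) and f*(-θ) = (1/2)‖θ‖₂² - yᵀθ. Then u^DS(θ; β̃) ≤ u^GM(θ; β̃) for all β̃ ∈ ℝ^d and θ ∈ ℝ^n. -/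
/-!
Both bounds equal `-f*(-θ)` or `⊥`, so it suffices that the Dynamic Sasvi condition
`θᵀXβ̃ ≤ g(β̃)` implies the Gap Safe Moon condition `-f*(-θ) ≤ P(β̃)`. This is the
Fenchel–Young inequality `-f*(-θ) ≤ f(Xβ̃) + θᵀXβ̃` for `f(z) = ½‖y - z‖²`, followed by
`θᵀXβ̃ ≤ g(β̃)`.
-/

open Matrix

theorem ite_bot_le_ite_bot {α : Type*} [Preorder α] [OrderBot α] {p q : Prop}
    [Decidable p] [Decidable q] (hpq : p → q) (a : α) :
    (if p then a else ⊥) ≤ (if q then a else ⊥) := by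
  by_cases hp : p
  · rw [if_pos hp, if_pos (hpq hp)]
  · rw [if_neg hp]
    exact bot_le

/-- Fenchel–Young for `f z = ½ ‖y - z‖²`, whose conjugate is `f* (-θ) = ½ ‖θ‖² - yᵀθ`. -/
theorem dotProduct_sub_half_self_le {ι : Type*} [Fintype ι] (y z θ : ι → ℝ) :
    y ⬝ᵥ θ - 1 / 2 * (θ ⬝ᵥ θ) ≤ 1 / 2 * ((y - z) ⬝ᵥ (y - z)) + θ ⬝ᵥ z := by
  have hsq : 0 ≤ (y - z - θ) ⬝ᵥ (y - z - θ) :=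
    Finset.sum_nonneg fun i _ => mul_self_nonneg _
  simp only [sub_dotProduct, dotProduct_sub] at hsq ⊢
  linarith [dotProduct_comm θ y, dotProduct_comm z θ]

theorem uDS_le_uGM_general {n d : ℕ}
    (g : (Fin d → ℝ) → ℝ) (X : Matrix (Fin n) (Fin d) ℝ) (y : Fin n → ℝ)
    (βt : Fin d → ℝ) (θ : Fin n → ℝ) :
    (if θ ⬝ᵥ (X *ᵥ βt) ≤ g βt
      then ((y ⬝ᵥ θ - 1 / 2 * (θ ⬝ᵥ θ) : ℝ) : EReal) else (⊥ : EReal)) ≤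
    (if y ⬝ᵥ θ - 1 / 2 * (θ ⬝ᵥ θ) ≤ 1 / 2 * ((y - X *ᵥ βt) ⬝ᵥ (y - X *ᵥ βt)) + g βt
      then ((y ⬝ᵥ θ - 1 / 2 * (θ ⬝ᵥ θ) : ℝ) : EReal) else (⊥ : EReal)) := by
  refine ite_bot_le_ite_bot (fun hDS => ?_) _
  calc y ⬝ᵥ θ - 1 / 2 * (θ ⬝ᵥ θ)
      ≤ 1 / 2 * ((y - X *ᵥ βt) ⬝ᵥ (y - X *ᵥ βt)) + θ ⬝ᵥ (X *ᵥ βt) :=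
        dotProduct_sub_half_self_le y _ θ
    _ ≤ 1 / 2 * ((y - X *ᵥ βt) ⬝ᵥ (y - X *ᵥ βt)) + g βt := by gcongr

/-- Dynamic Sasvi upper bound dominates the Gap Safe Moon upper bound:
`u^DS(θ; β̃) ≤ u^GM(θ; β̃)`. -/
theorem uDS_le_uGM {n d : ℕ}
    (g : (Fin d → ℝ) → ℝ) (X : Matrix (Fin n) (Fin d) ℝ) (y : Fin n → ℝ)
    (hpos : ∀ (k : ℝ), 0 ≤ k → ∀ β : Fin d → ℝ, g (k • β) = k * g β)
    (βt : Fin d → ℝ) (θ : Fin n → ℝ) :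
    (if θ ⬝ᵥ (X *ᵥ βt) ≤ g βt
      then ((y ⬝ᵥ θ - 1 / 2 * (θ ⬝ᵥ θ) : ℝ) : EReal) else (⊥ : EReal)) ≤
    (if y ⬝ᵥ θ - 1 / 2 * (θ ⬝ᵥ θ) ≤ 1 / 2 * ((y - X *ᵥ βt) ⬝ᵥ (y - X *ᵥ βt)) + g βt
      then ((y ⬝ᵥ θ - 1 / 2 * (θ ⬝ᵥ θ) : ℝ) : EReal) else (⊥ : EReal)) :=
  uDS_le_uGM_general g X y βt θ
end

section
/- (Gap Safe Moon region) For the Lasso-like problem with 1-strongly convex f*(-θ) = (1/2)‖θ‖₂² - yᵀθ, let θ̂ be the dual maximizer. For any β̃ and any θ̃ with g*(X^Tθ̃)=0, θ̂ ∈ { θ : -(1/2)‖θ‖₂² + yᵀθ ≤ P(β̃) and (θ̃ - θ)ᵀ(y - θ) ≤ 0 }, where P(β̃) = (1/2)‖y - Xβ̃‖₂² + g(β̃). -/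
open Matrix

noncomputable def fenchelConj {m : ℕ} (h : (Fin m → ℝ) → EReal) (v : Fin m → ℝ) : EReal :=
  ⨆ z : Fin m → ℝ, ((v ⬝ᵥ z : ℝ) : EReal) - h z

def ERealConvexOn {m : ℕ} (h : (Fin m → ℝ) → EReal) : Prop :=
  ∀ z w : Fin m → ℝ, ∀ a b : ℝ, 0 ≤ a → 0 ≤ b → a + b = 1 →
    h (a • z + b • w) ≤ (a : EReal) * h z + (b : EReal) * h w

/-!
For a positively homogeneous `g`, the conjugate `g*` only takes the values `0` and `⊤`, so the dual
objective equals `q θ = yᵀθ - ‖θ‖²/2` on the convex set `{θ | g*(Xᵀθ) = 0}` and is `⊥` off it.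
Since `θ̃` lies in that set, so does the maximizer `θ̂`. Weak duality `q θ̂ ≤ P(β̃)` is
`‖y - Xβ̃ - θ̂‖² ≥ 0` together with `θ̂ᵀXβ̃ ≤ g(β̃)`; the second condition is the first-order
optimality condition of the concave quadratic `q` at `θ̂` in the direction of `θ̃`.
-/

section FenchelConj

variable {m : ℕ} {h : (Fin m → ℝ) → EReal}

theorem fenchelConj_nonpos_iff (v : Fin m → ℝ) :
    fenchelConj h v ≤ 0 ↔ ∀ z, ((v ⬝ᵥ z : ℝ) : EReal) ≤ h z := by
  simp only [fenchelConj, iSup_le_iff, EReal.sub_nonpos]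

theorem convex_setOf_fenchelConj_nonpos : Convex ℝ {v | fenchelConj h v ≤ 0} := by
  simp_rw [fenchelConj_nonpos_iff]
  intro a ha b hb s t hs ht hst z
  have ha := ha z
  have hb := hb z
  simp only [add_dotProduct, smul_dotProduct, smul_eq_mul]
  generalize h z = c at ha hb ⊢
  induction c using EReal.rec with
  | bot => exact absurd ha (by simp)
  | top => exact le_top
  | coe c =>
    have ha : a ⬝ᵥ z ≤ c := by exact_mod_cast ha
    have hb : b ⬝ᵥ z ≤ c := by exact_mod_cast hb
    have hcomb : s * (a ⬝ᵥ z) + t * (b ⬝ᵥ z) ≤ c := by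
      have hc : c = s * c + t * c := by rw [← add_mul, hst, one_mul]
      linarith [mul_le_mul_of_nonneg_left ha hs, mul_le_mul_of_nonneg_left hb ht]
    exact_mod_cast hcomb

variable (hpos : ∀ k : ℝ, 0 ≤ k → ∀ β, h (k • β) = (k : EReal) * h β)
include hpos

theorem fenchelConj_nonneg_of_posHomogeneous (v : Fin m → ℝ) : 0 ≤ fenchelConj h v := by
  have hzero : h 0 = 0 := by simpa using hpos 0 le_rfl 0
  simpa [fenchelConj, hzero] using le_iSup (fun z => ((v ⬝ᵥ z : ℝ) : EReal) - h z) 0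

theorem fenchelConj_eq_top_of_posHomogeneous {v : Fin m → ℝ} (hv : 0 < fenchelConj h v) :
    fenchelConj h v = ⊤ := by
  obtain ⟨z, hz⟩ := lt_iSup_iff.1 hv
  have hle : ∀ z, ((v ⬝ᵥ z : ℝ) : EReal) - h z ≤ fenchelConj h v :=
    le_iSup (fun z => ((v ⬝ᵥ z : ℝ) : EReal) - h z)
  induction hc : h z using EReal.rec with
  | bot => simpa [hc] using hle z
  | top => simp [hc] at hz
  | coe c =>
    rw [hc, ← EReal.coe_sub, EReal.coe_pos] at hz
    rw [EReal.eq_top_iff_forall_lt]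
    intro M
    -- scaling `z` by `k` scales the positive gap `v ⬝ᵥ z - c` by `k`
    obtain ⟨k, hk⟩ := exists_nat_gt (M / (v ⬝ᵥ z - c))
    have hkz := hle ((k : ℝ) • z)
    rw [hpos k k.cast_nonneg z, hc, dotProduct_smul, smul_eq_mul, ← EReal.coe_mul,
      ← EReal.coe_sub] at hkz
    refine lt_of_lt_of_le ?_ hkz
    rw [div_lt_iff₀ hz] at hk
    exact_mod_cast (by linarith : M < k * (v ⬝ᵥ z) - k * c)

theorem fenchelConj_eq_zero_of_ne_top_of_posHomogeneous {v : Fin m → ℝ}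
    (hv : fenchelConj h v ≠ ⊤) : fenchelConj h v = 0 :=
  le_antisymm (not_lt.1 fun hlt => hv (fenchelConj_eq_top_of_posHomogeneous hpos hlt))
    (fenchelConj_nonneg_of_posHomogeneous hpos v)

end FenchelConj

section Quadratic

variable {ι : Type*} [Fintype ι]

theorem dotProduct_sub_half_le (y θ w : ι → ℝ) :
    y ⬝ᵥ θ - 1 / 2 * (θ ⬝ᵥ θ) ≤ 1 / 2 * ((y - w) ⬝ᵥ (y - w)) + θ ⬝ᵥ w := by
  have hsq : 0 ≤ (y - w - θ) ⬝ᵥ (y - w - θ) :=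
    Finset.sum_nonneg fun i _ => mul_self_nonneg _
  simp only [sub_dotProduct, dotProduct_sub, dotProduct_comm w y, dotProduct_comm θ y,
    dotProduct_comm θ w] at hsq ⊢
  linarith

theorem dotProduct_sub_half_add_smul (y θ u : ι → ℝ) (s : ℝ) :
    y ⬝ᵥ (θ + s • u) - 1 / 2 * ((θ + s • u) ⬝ᵥ (θ + s • u)) =
      y ⬝ᵥ θ - 1 / 2 * (θ ⬝ᵥ θ) + s * (u ⬝ᵥ (y - θ)) - s ^ 2 / 2 * (u ⬝ᵥ u) := by
  simp only [dotProduct_add, add_dotProduct, dotProduct_smul, smul_dotProduct, smul_eq_mul,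
    dotProduct_sub, dotProduct_comm u y, dotProduct_comm u θ]
  ring

theorem dotProduct_sub_nonpos_of_isMaxOn {S : Set (ι → ℝ)} (hS : Convex ℝ S) {y θh θt : ι → ℝ}
    (hθh : θh ∈ S) (hθt : θt ∈ S)
    (hmax : IsMaxOn (fun θ => y ⬝ᵥ θ - 1 / 2 * (θ ⬝ᵥ θ)) S θh) :
    (θt - θh) ⬝ᵥ (y - θh) ≤ 0 := by
  set u := θt - θh
  have hstep : ∀ s ∈ Set.Ioo (0 : ℝ) 1, u ⬝ᵥ (y - θh) ≤ s * (u ⬝ᵥ u / 2) := by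
    intro s hs
    have hle := isMaxOn_iff.1 hmax _ (hS.add_smul_sub_mem hθh hθt ⟨hs.1.le, hs.2.le⟩)
    simp only [dotProduct_sub_half_add_smul] at hle
    nlinarith [hs.1]
  have hlim : Filter.Tendsto (fun s : ℝ => s * (u ⬝ᵥ u / 2)) (nhdsWithin 0 (Set.Ioi 0)) (nhds 0) :=
    by simpa using ((continuous_mul_const (u ⬝ᵥ u / 2)).tendsto 0).mono_left nhdsWithin_le_nhds
  exact ge_of_tendsto hlim (Filter.mem_of_superset (Ioo_mem_nhdsGT one_pos) hstep)

end Quadratic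

theorem gap_safe_moon_region_general {n d : ℕ}
    (g : (Fin d → ℝ) → EReal) (X : Matrix (Fin n) (Fin d) ℝ) (y : Fin n → ℝ)
    (hpos : ∀ (k : ℝ), 0 ≤ k → ∀ β : Fin d → ℝ, g (k • β) = (k : EReal) * g β)
    (D : (Fin n → ℝ) → EReal)
    (hD : ∀ θ, D θ = ((y ⬝ᵥ θ - 1 / 2 * (θ ⬝ᵥ θ) : ℝ) : EReal) - fenchelConj g (Xᵀ *ᵥ θ))
    (θh : Fin n → ℝ) (hmax : ∀ θ, D θ ≤ D θh)
    (βt : Fin d → ℝ) (θt : Fin n → ℝ) (hθt : fenchelConj g (Xᵀ *ᵥ θt) = 0) :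
    θh ∈ {θ : Fin n → ℝ |
      ((y ⬝ᵥ θ - 1 / 2 * (θ ⬝ᵥ θ) : ℝ) : EReal) ≤
        ((1 / 2 * ((y - X *ᵥ βt) ⬝ᵥ (y - X *ᵥ βt)) : ℝ) : EReal) + g βt ∧
      (θt - θ) ⬝ᵥ (y - θ) ≤ 0} := by
  set S := {θ | fenchelConj g (Xᵀ *ᵥ θ) ≤ 0}
  have hS : Convex ℝ S := convex_setOf_fenchelConj_nonpos.linear_preimage (mulVecLin Xᵀ)
  have hD_of_mem : ∀ θ ∈ S, D θ = ((y ⬝ᵥ θ - 1 / 2 * (θ ⬝ᵥ θ) : ℝ) : EReal) := fun θ hθ => by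
    rw [hD, le_antisymm hθ (fenchelConj_nonneg_of_posHomogeneous hpos _), sub_zero]
  have hθh : θh ∈ S := by
    refine (fenchelConj_eq_zero_of_ne_top_of_posHomogeneous hpos fun htop => ?_).le
    have hle := hmax θt
    rw [hD, hD, hθt, htop, sub_zero, EReal.sub_top, le_bot_iff] at hle
    exact EReal.coe_ne_bot _ hle
  have hθt_mem : θt ∈ S := hθt.le
  refine ⟨?_, dotProduct_sub_nonpos_of_isMaxOn hS hθh hθt_mem fun θ hθ => ?_⟩
  · have hdual := (fenchelConj_nonpos_iff _).1 hθh βt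
    rw [mulVec_transpose, ← dotProduct_mulVec] at hdual
    calc ((y ⬝ᵥ θh - 1 / 2 * (θh ⬝ᵥ θh) : ℝ) : EReal)
        ≤ ((1 / 2 * ((y - X *ᵥ βt) ⬝ᵥ (y - X *ᵥ βt)) : ℝ) : EReal) +
            ((θh ⬝ᵥ (X *ᵥ βt) : ℝ) : EReal) := by
          exact_mod_cast dotProduct_sub_half_le y θh (X *ᵥ βt)
      _ ≤ _ := add_le_add_right hdual _
  · have hle := hmax θ
    rw [hD_of_mem θ hθ, hD_of_mem θh hθh] at hle
    exact_mod_cast hle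

/-- Gap Safe Moon region for Lasso-like problems. -/
theorem gap_safe_moon_region {n d : ℕ}
    (g : (Fin d → ℝ) → EReal) (X : Matrix (Fin n) (Fin d) ℝ) (y : Fin n → ℝ)
    (hg_top : ∃ z, g z ≠ ⊤) (hg_bot : ∀ z, g z ≠ ⊥)
    (hg_lsc : LowerSemicontinuous g) (hg_conv : ERealConvexOn g)
    (hpos : ∀ (k : ℝ), 0 ≤ k → ∀ β : Fin d → ℝ, g (k • β) = (k : EReal) * g β)
    (D : (Fin n → ℝ) → EReal)
    (hD : ∀ θ, D θ = ((y ⬝ᵥ θ - 1 / 2 * (θ ⬝ᵥ θ) : ℝ) : EReal) - fenchelConj g (Xᵀ *ᵥ θ))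
    (θh : Fin n → ℝ) (hmax : ∀ θ, D θ ≤ D θh)
    (βt : Fin d → ℝ) (θt : Fin n → ℝ) (hθt : fenchelConj g (Xᵀ *ᵥ θt) = 0) :
    θh ∈ {θ : Fin n → ℝ |
      ((y ⬝ᵥ θ - 1 / 2 * (θ ⬝ᵥ θ) : ℝ) : EReal) ≤
        ((1 / 2 * ((y - X *ᵥ βt) ⬝ᵥ (y - X *ᵥ βt)) : ℝ) : EReal) + g βt ∧
      (θt - θ) ⬝ᵥ (y - θ) ≤ 0} :=
  gap_safe_moon_region_general g X y hpos D hD θh hmax βt θt hθt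
end

section
/- (L1 screening rule) Consider minimizing (1/2)‖y - Xβ‖₂² + ‖β‖₁ with primal minimizer β̂ and dual maximizer θ̂, satisfying X^T θ̂ ∈ ∂‖·‖₁(β̂). If R is a set containing θ̂ and max_{θ ∈ R} |x_i^T θ| < 1 for the i-th column x_i of X, then β̂_i = 0. -/
/-!
Testing the subgradient inequality of `‖·‖₁` at `β` against the point obtained from `β` by zeroing
its `i`-th coordinate gives `|β i| ≤ v i * β i ≤ |v i| * |β i|`, which forces `β i = 0` once
`|v i| < 1`. The screening region `R` only serves to certify `|v i| < 1` for `v = Xᵀ θ̂`.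
-/

open Matrix

/-- `v ∈ ∂‖·‖₁(β)`. -/
def IsL1Subgradient {ι : Type*} [Fintype ι] (v β : ι → ℝ) : Prop :=
  ∀ w : ι → ℝ, v ⬝ᵥ (w - β) + ∑ j, |β j| ≤ ∑ j, |w j|

section

variable {ι : Type*} [DecidableEq ι]

lemma update_zero_sub_self (β : ι → ℝ) (i : ι) :
    Function.update β i 0 - β = Pi.single i (-β i) := by
  ext j
  rcases eq_or_ne j i with rfl | hji <;> simp [*]

lemma sum_abs_update_zero_add_abs [Fintype ι] (β : ι → ℝ) (i : ι) :
    ∑ j, |Function.update β i 0 j| + |β i| = ∑ j, |β j| := by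
  rw [← Finset.add_sum_erase _ _ (Finset.mem_univ i), ← Finset.add_sum_erase _ _ (Finset.mem_univ i),
    Finset.sum_congr rfl fun j hj => by rw [Function.update_of_ne (Finset.ne_of_mem_erase hj)]]
  simp

lemma IsL1Subgradient.abs_le_mul [Fintype ι] {v β : ι → ℝ} (hv : IsL1Subgradient v β) (i : ι) :
    |β i| ≤ v i * β i := by
  have h := hv (Function.update β i 0)
  rw [update_zero_sub_self, dotProduct_single, ← sum_abs_update_zero_add_abs β i] at h
  linarith

lemma IsL1Subgradient.eq_zero_of_abs_lt_one [Fintype ι] {v β : ι → ℝ}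
    (hv : IsL1Subgradient v β) {i : ι} (hvi : |v i| < 1) : β i = 0 := by
  by_contra hβi
  have hpos : 0 < |β i| := abs_pos.mpr hβi
  have : |β i| < |β i| :=
    calc |β i| ≤ v i * β i := hv.abs_le_mul i
      _ ≤ |v i| * |β i| := by rw [← abs_mul]; exact le_abs_self _
      _ < 1 * |β i| := by gcongr
      _ = |β i| := one_mul _
  exact lt_irrefl _ this

end

theorem l1_screening_general {n d : ℕ}
    (X : Matrix (Fin n) (Fin d) ℝ)
    (βh : Fin d → ℝ) (θh : Fin n → ℝ)
    (hsub : ∀ w : Fin d → ℝ, (Xᵀ *ᵥ θh) ⬝ᵥ (w - βh) + ∑ i, |βh i| ≤ ∑ i, |w i|)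
    (R : Set (Fin n → ℝ)) (hθhR : θh ∈ R)
    (i : Fin d) (hscr : ∀ θ ∈ R, |(Xᵀ *ᵥ θ) i| < 1) :
    βh i = 0 :=
  IsL1Subgradient.eq_zero_of_abs_lt_one hsub (hscr θh hθhR)

/-- L1 screening rule: if `θ̂ ∈ R` and `|x_iᵀθ| < 1` on all of `R`, then `β̂_i = 0`. -/
theorem l1_screening {n d : ℕ}
    (X : Matrix (Fin n) (Fin d) ℝ) (y : Fin n → ℝ)
    (βh : Fin d → ℝ) (θh : Fin n → ℝ)
    (hβ : ∀ β : Fin d → ℝ,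
      1 / 2 * ((y - X *ᵥ βh) ⬝ᵥ (y - X *ᵥ βh)) + ∑ i, |βh i| ≤
      1 / 2 * ((y - X *ᵥ β) ⬝ᵥ (y - X *ᵥ β)) + ∑ i, |β i|)
    (hsub : ∀ w : Fin d → ℝ, (Xᵀ *ᵥ θh) ⬝ᵥ (w - βh) + ∑ i, |βh i| ≤ ∑ i, |w i|)
    (R : Set (Fin n → ℝ)) (hθhR : θh ∈ R)
    (i : Fin d) (hscr : ∀ θ ∈ R, |(Xᵀ *ᵥ θ) i| < 1) :
    βh i = 0 :=
  l1_screening_general X βh θh hsub R hθhR i hscr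
end
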